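/- There exists a finite weighted DAG G with source s, sink t, salience factor b and reward r such that G itself is not motivating but some proper subgraph of G containing s and t is motivating. (For instance, in the Bob example with b = 3 and r = 59, deleting the edge y → z of weight 3 yields a motivating subgraph.) -/

import Mathlib

variable {V : Type*}

/-- Total weight of a walk given as its list of vertices. -/
def cost (w : V → V → ℝ) : List V → ℝ
  | u :: v :: rest => w u v + cost w (v :: rest)
  | _ => 0

/-- Perceived cost of a walk for an agent with salience factor `b`:
the first edge is scaled by `b`. -/
def perceived (b : ℝ) (w : V → V → ℝ) : List V → ℝ
  | u :: v :: rest => b * w u v + cost w (v :: rest)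
  | _ => 0

/-- `p` is a path (walk) in the digraph `E` ending at `t`. -/
def IsPathTo (E : V → V → Prop) (t : V) (p : List V) : Prop :=
  p.Chain' E ∧ p.getLast? = some t

/-- Perceived cost from `u` to the target `t`:
the infimum of perceived costs of `u`-`t` paths. -/
noncomputable def zeta (E : V → V → Prop) (w : V → V → ℝ) (b : ℝ) (t u : V) : ℝ :=
  sInf {c | ∃ p : List V, IsPathTo E t (u :: p) ∧ perceived b w (u :: p) = c}

/-- Shortest-path distance from `u` to `t`. -/
noncomputable def distTo (E : V → V → Prop) (w : V → V → ℝ) (t u : V) : ℝ :=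
  sInf {c | ∃ p : List V, IsPathTo E t (u :: p) ∧ cost w (u :: p) = c}

/-- One step of the present-biased agent: at `u` it does not abandon
(`ζ(u) ≤ r`) and moves to `v`, the second vertex of some `u`-`t` path of
minimum perceived cost. -/
noncomputable def Step (E : V → V → Prop) (w : V → V → ℝ) (b r : ℝ) (t u v : V) : Prop :=
  zeta E w b t u ≤ r ∧
    ∃ p : List V, IsPathTo E t (u :: v :: p) ∧ perceived b w (u :: v :: p) = zeta E w b t u

/-- The instance is motivating: whenever the agent, having walked from `s`
following `Step`, finds itself at a vertex `u ≠ t`, it can take another step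
(so it never abandons before reaching `t`). -/
noncomputable def Motivating (E : V → V → Prop) (w : V → V → ℝ) (b r : ℝ) (s t : V) : Prop :=
  ∀ (q : List V) (u : V), q.head? = some s → q.Chain' (Step E w b r t) →
    q.getLast? = some u → u ≠ t → ∃ v, Step E w b r t u v

/-! On the vertices `s, x, t` take edges `s → x`, `x → t`, `s → t` of weights `1, 4, 3`, with
`b = 3` and `r = 9`. At `s` the detour through `x` is perceived as `3·1 + 4 = 7`, cheaper than
the direct edge `3·3 = 9`, so the agent moves to `x`; there the only remaining edge is perceived
as `3·4 = 12 > 9` and it abandons. Deleting the two detour edges leaves only `s → t`, perceived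
as `9 ≤ r`, so the agent now walks straight to `t`. -/

section

variable {E : V → V → Prop} {w : V → V → ℝ} {b r : ℝ} {s t u v : V}

theorem isPathTo_singleton_iff : IsPathTo E t [u] ↔ u = t :=
  ⟨fun h => by simpa using h.2, fun h => ⟨List.isChain_singleton u, by simp [h]⟩⟩

theorem isPathTo_cons_cons_iff {p : List V} :
    IsPathTo E t (u :: v :: p) ↔ E u v ∧ IsPathTo E t (v :: p) := by
  change List.IsChain E _ ∧ _ ↔ E u v ∧ List.IsChain E _ ∧ _
  rw [List.isChain_cons_cons, List.getLast?_cons_cons, and_assoc]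

theorem isPathTo_self_iff (ht : ∀ v, ¬ E t v) {p : List V} :
    IsPathTo E t (t :: p) ↔ p = [] := by
  cases p with
  | nil => simp [isPathTo_singleton_iff]
  | cons v p => simp [isPathTo_cons_cons_iff, ht]

theorem zeta_eq {c : ℝ} (hc : ∃ p, IsPathTo E t (u :: p) ∧ perceived b w (u :: p) = c)
    (hle : ∀ p, IsPathTo E t (u :: p) → c ≤ perceived b w (u :: p)) :
    zeta E w b t u = c :=
  IsLeast.csInf_eq ⟨hc, by rintro _ ⟨p, hp, rfl⟩; exact hle p hp⟩

theorem Step.adj (h : Step E w b r t u v) : E u v := by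
  obtain ⟨-, p, hp, -⟩ := h
  exact (isPathTo_cons_cons_iff.mp hp).1

theorem not_motivating_of_step (hs : Step E w b r t s u) (hu : u ≠ t)
    (hr : r < zeta E w b t u) : ¬ Motivating E w b r s t := by
  intro h
  obtain ⟨v, hv⟩ := h [s, u] u rfl (List.isChain_pair.mpr hs) rfl hu
  exact hr.not_ge hv.1

theorem motivating_of_forall_exists_step
    (h : ∀ u, u ≠ t → (u = s ∨ ∃ x, E x u) → ∃ v, Step E w b r t u v) :
    Motivating E w b r s t := by
  intro q u hq hchain hu hut
  refine h u hut ?_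
  refine List.IsChain.induction (fun x => x = s ∨ ∃ y, E y x) q hchain
    (fun x _ hxy _ => Or.inr ⟨x, hxy.adj⟩) (fun hne => Or.inl ?_) u (List.mem_of_getLast? hu)
  simpa [List.head?_eq_some_head hne] using hq

end

namespace Detour

inductive Vtx
  | s
  | x
  | t
  deriving DecidableEq

open Vtx

instance : Fintype Vtx := ⟨{s, x, t}, by rintro (_ | _ | _) <;> simp⟩

def edge : Vtx → Vtx → Prop
  | s, x | x, t | s, t => True
  | _, _ => False

def shortcut : Vtx → Vtx → Prop
  | s, t => True
  | _, _ => False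

def weight : Vtx → Vtx → ℝ
  | s, x => 1
  | x, t => 4
  | s, t => 3
  | _, _ => 0

def rank : Vtx → ℕ
  | s => 0
  | x => 1
  | t => 2

theorem rank_lt_of_edge {u v : Vtx} (h : edge u v) : rank u < rank v := by
  cases u <;> cases v <;> simp_all [edge, rank]

theorem weight_nonneg (u v : Vtx) : 0 ≤ weight u v := by
  cases u <;> cases v <;> norm_num [weight]

theorem shortcut_le_edge {u v : Vtx} (h : shortcut u v) : edge u v := by
  cases u <;> cases v <;> simp_all [edge, shortcut]

theorem shortcut_ne_edge : shortcut ≠ edge := fun h => by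
  simpa [shortcut, edge] using congrFun (congrFun h x) t

theorem not_edge_from_t (v : Vtx) : ¬ edge t v := by cases v <;> simp [edge]

theorem paths_from_x {p : List Vtx} : IsPathTo edge t (x :: p) ↔ p = [t] := by
  rcases p with _ | ⟨v, p⟩
  · simp [isPathTo_singleton_iff]
  · cases v <;> simp [isPathTo_cons_cons_iff, edge, isPathTo_self_iff not_edge_from_t]

theorem paths_from_s {p : List Vtx} :
    IsPathTo edge t (s :: p) ↔ p = [t] ∨ p = [x, t] := by
  rcases p with _ | ⟨v, p⟩
  · simp [isPathTo_singleton_iff]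
  · cases v <;>
      simp [isPathTo_cons_cons_iff, edge, isPathTo_self_iff not_edge_from_t, paths_from_x]

theorem not_shortcut_from_t (v : Vtx) : ¬ shortcut t v := by cases v <;> simp [shortcut]

theorem shortcut_paths_from_s {p : List Vtx} : IsPathTo shortcut t (s :: p) ↔ p = [t] := by
  rcases p with _ | ⟨v, p⟩
  · simp [isPathTo_singleton_iff]
  · cases v <;> simp [isPathTo_cons_cons_iff, shortcut, isPathTo_self_iff not_shortcut_from_t]

theorem zeta_x : zeta edge weight 3 t x = 12 := by
  refine zeta_eq ⟨[t], paths_from_x.mpr rfl, by norm_num [perceived, cost, weight]⟩ ?_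
  rintro p hp
  obtain rfl := paths_from_x.mp hp
  norm_num [perceived, cost, weight]

theorem zeta_s : zeta edge weight 3 t s = 7 := by
  refine zeta_eq
    ⟨[x, t], paths_from_s.mpr (Or.inr rfl), by norm_num [perceived, cost, weight]⟩ ?_
  rintro p hp
  obtain rfl | rfl := paths_from_s.mp hp <;> norm_num [perceived, cost, weight]

theorem shortcut_zeta_s : zeta shortcut weight 3 t s = 9 := by
  refine zeta_eq ⟨[t], shortcut_paths_from_s.mpr rfl, by norm_num [perceived, cost, weight]⟩ ?_
  rintro p hp
  obtain rfl := shortcut_paths_from_s.mp hp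
  norm_num [perceived, cost, weight]

theorem step_s_x : Step edge weight 3 9 t s x :=
  ⟨by rw [zeta_s]; norm_num, [t], paths_from_s.mpr (Or.inr rfl),
    by rw [zeta_s]; norm_num [perceived, cost, weight]⟩

theorem not_motivating_edge : ¬ Motivating edge weight 3 9 s t :=
  not_motivating_of_step step_s_x (by simp) (by rw [zeta_x]; norm_num)

theorem motivating_shortcut : Motivating shortcut weight 3 9 s t := by
  refine motivating_of_forall_exists_step fun u hut hu => ?_
  obtain rfl | ⟨y, hy⟩ := hu
  · exact ⟨t, by rw [shortcut_zeta_s], [], shortcut_paths_from_s.mpr rfl,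
      by rw [shortcut_zeta_s]; norm_num [perceived, cost, weight]⟩
  · cases y <;> cases u <;> simp_all [shortcut]

end Detour

/-- There exists a finite weighted DAG with source `s`, sink `t`, salience
factor `b` and reward `r` that is not motivating, yet some proper subgraph
(containing `s` and `t`) is motivating. -/
theorem stmt_13 :
    ∃ (V : Type) (_ : Fintype V) (E : V → V → Prop) (w : V → V → ℝ)
      (s t : V) (b r : ℝ),
      (∃ f : V → ℕ, ∀ u v, E u v → f u < f v) ∧
      (∀ u v, 0 ≤ w u v) ∧ 1 ≤ b ∧ 0 ≤ r ∧
      ¬ Motivating E w b r s t ∧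
      ∃ E' : V → V → Prop, (∀ u v, E' u v → E u v) ∧ E' ≠ E ∧
        Motivating E' w b r s t :=
  ⟨Detour.Vtx, inferInstance, Detour.edge, Detour.weight, .s, .t, 3, 9,
    ⟨Detour.rank, fun _ _ => Detour.rank_lt_of_edge⟩, Detour.weight_nonneg, by norm_num,
    by norm_num, Detour.not_motivating_edge, Detour.shortcut,
    fun _ _ => Detour.shortcut_le_edge, Detour.shortcut_ne_edge, Detour.motivating_shortcut⟩
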